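/- arXiv:1711.01370 — 4 statements merged into one kernel-verified Lean document; each statement's English description precedes it below -/
import Mathlib

section
/- Let T be a finite tree and let G be the directed tree obtained from T by replacing each edge {a,b} with the two directed edges (a,b) and (b,a), each carrying a nonnegative weight w; let d be the shortest-path quasimetric of G (the total weight of the unique directed path between two vertices). For each directed edge e = (a,b) of G, let S_e ⊆ V(T) be the vertex set of the connected component of a in T with the edge {a,b} removed. Then for all u, v ∈ V(T): d(u,v) = Σ_{e ∈ E(G)} w(e) · d_{S_e}(u,v). In particular, the shortest-path quasimetric of a directed tree embeds isometrically into directed ℓ1. -/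
open scoped ENNReal NNReal

noncomputable section

/-- Cost of a walk (given as the list of consecutive vertices visited) under
edge weights `w` (where `w u v = ⊤` encodes the absence of the edge `(u,v)`). -/
def walkCost {V : Type*} (w : V → V → ℝ≥0∞) : List V → ℝ≥0∞
  | [] => 0
  | [_] => 0
  | a :: b :: l => w a b + walkCost w (b :: l)

/-- Shortest-path quasimetric induced by edge weights `w`:
the infimum of the cost over all walks from `u` to `v` (`⊤` if unreachable). -/
def spDist {V : Type*} (w : V → V → ℝ≥0∞) (u v : V) : ℝ≥0∞ :=
  ⨅ l : { l : List V // l.head? = some u ∧ l.getLast? = some v }, walkCost w l.1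

-- The directed cut metric associated with the set `S` (valued in `ℝ≥0∞`).
open Classical in
def dcutE {X : Type*} (S : Set X) (x y : X) : ℝ≥0∞ :=
  if x ∈ S ∧ y ∉ S then 1 else 0

/-!
Write `D(u, v)` for the right-hand side. Each `d_S` satisfies the triangle inequality, hence so
does `D`. Deleting a tree edge `{a, b}` disconnects `a` from `b`, so for an edge `(u, u')` the only
cut `S_e` separating `u` from `u'` is `S_(u,u')`; more precisely, when `v` lies on the `u'`-side of
`{u, u'}` we get `D(u, v) = w(u, u') + D(u', v)`. The triangle inequality then bounds the cost of
every walk from `u` to `v` below by `D(u, v)`, and additivity along the tree path from `u` to `v`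
shows that this path costs exactly `D(u, v)`.
-/

open SimpleGraph

lemma SimpleGraph.IsAcyclic.not_reachable_deleteEdges_of_adj {V : Type*} {T : SimpleGraph V}
    (hT : T.IsAcyclic) {a b : V} (h : T.Adj a b) :
    ¬ (T.deleteEdges {s(a, b)}).Reachable a b :=
  isBridge_iff.mp (isAcyclic_iff_forall_adj_isBridge.mp hT h)

namespace TreeCut

variable {V : Type*}

lemma dcutE_self (S : Set V) (x : V) : dcutE S x x = 0 := by
  simp [dcutE]

lemma dcutE_le_add (S : Set V) (x y z : V) : dcutE S x z ≤ dcutE S x y + dcutE S y z := by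
  unfold dcutE
  split_ifs <;> simp_all

def edgeSide (T : SimpleGraph V) (a b : V) : Set V :=
  {x | (T.deleteEdges {s(a, b)}).Reachable x a}

open Classical in
def edgeWeight (T : SimpleGraph V) (w : V → V → ℝ≥0) (x y : V) : ℝ≥0∞ :=
  if T.Adj x y then w x y else ⊤

open Classical in
def edgeCutSum [Fintype V] (T : SimpleGraph V) (w : V → V → ℝ≥0) (u v : V) : ℝ≥0∞ :=
  ∑ p : V × V,
    if T.Adj p.1 p.2 then (w p.1 p.2 : ℝ≥0∞) * dcutE (edgeSide T p.1 p.2) u v else 0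

variable {T : SimpleGraph V}

lemma mem_edgeSide_iff_of_adj {a b u u' : V} (h : T.Adj u u') (hne : s(u, u') ≠ s(a, b)) :
    u ∈ edgeSide T a b ↔ u' ∈ edgeSide T a b := by
  have had : (T.deleteEdges {s(a, b)}).Adj u u' := deleteEdges_adj.mpr ⟨h, hne⟩
  exact ⟨had.symm.reachable.trans, had.reachable.trans⟩

open Classical in
lemma dcutE_edgeSide_of_adj (hT : T.IsAcyclic) {u u' v a b : V} (h : T.Adj u u')
    (hv : (T.deleteEdges {s(u, u')}).Reachable u' v) :
    dcutE (edgeSide T a b) u v =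
      (if (a, b) = (u, u') then 1 else 0) + dcutE (edgeSide T a b) u' v := by
  by_cases hfwd : (a, b) = (u, u')
  · obtain ⟨rfl, rfl⟩ := Prod.ext_iff.mp hfwd
    have hu : a ∈ edgeSide T a b := Reachable.refl a
    have hb : b ∉ edgeSide T a b := fun hr => hT.not_reachable_deleteEdges_of_adj h hr.symm
    have hv' : v ∉ edgeSide T a b := fun hr => hb (hv.trans hr)
    simp [dcutE, hu, hb, hv']
  by_cases hbwd : (a, b) = (u', u)
  · obtain ⟨rfl, rfl⟩ := Prod.ext_iff.mp hbwd
    have hu : b ∉ edgeSide T a b := fun hr => hT.not_reachable_deleteEdges_of_adj h.symm hr.symm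
    have hv' : v ∈ edgeSide T a b := by
      show (T.deleteEdges {s(a, b)}).Reachable v a
      rw [Sym2.eq_swap]
      exact hv.symm
    simp [dcutE, hu, hv', hfwd]
  · have hne : s(u, u') ≠ s(a, b) := by
      rw [Ne, Sym2.eq_iff]
      rintro (⟨rfl, rfl⟩ | ⟨rfl, rfl⟩) <;> simp_all
    simp only [dcutE, mem_edgeSide_iff_of_adj h hne, if_neg hfwd, zero_add]

variable [Fintype V] (w : V → V → ℝ≥0)

lemma edgeCutSum_self (u : V) : edgeCutSum T w u u = 0 := by
  simp [edgeCutSum, dcutE_self]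

lemma edgeCutSum_le_add (x y z : V) :
    edgeCutSum T w x z ≤ edgeCutSum T w x y + edgeCutSum T w y z := by
  unfold edgeCutSum
  rw [← Finset.sum_add_distrib]
  gcongr with p
  split_ifs
  · rw [← mul_add]
    gcongr
    exact dcutE_le_add _ _ _ _
  · simp

lemma edgeCutSum_eq_add (hT : T.IsAcyclic) {u u' v : V} (h : T.Adj u u')
    (hv : (T.deleteEdges {s(u, u')}).Reachable u' v) :
    edgeCutSum T w u v = w u u' + edgeCutSum T w u' v := by
  classical
  have hsummand : ∀ p : V × V,
      (if T.Adj p.1 p.2 then (w p.1 p.2 : ℝ≥0∞) * dcutE (edgeSide T p.1 p.2) u v else 0) =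
        (if (u, u') = p then (w u u' : ℝ≥0∞) else 0) +
          if T.Adj p.1 p.2 then (w p.1 p.2 : ℝ≥0∞) * dcutE (edgeSide T p.1 p.2) u' v
          else 0 := by
    rintro ⟨a, b⟩
    by_cases hab : T.Adj a b
    · rw [if_pos hab, if_pos hab, dcutE_edgeSide_of_adj hT h hv, mul_add]
      by_cases hp : (a, b) = (u, u')
      · obtain ⟨rfl, rfl⟩ := Prod.ext_iff.mp hp
        simp
      · simp [hp, Ne.symm hp]
    · have hp : (u, u') ≠ (a, b) := by
        rintro ⟨⟩
        exact hab h
      simp [hab, hp]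
  unfold edgeCutSum
  rw [Finset.sum_congr rfl fun p _ => hsummand p, Finset.sum_add_distrib, Finset.sum_ite_eq]
  simp

lemma edgeCutSum_of_adj (hT : T.IsAcyclic) {a b : V} (h : T.Adj a b) :
    edgeCutSum T w a b = w a b := by
  rw [edgeCutSum_eq_add w hT h (Reachable.refl b), edgeCutSum_self, add_zero]

lemma edgeCutSum_le_walkCost (hT : T.IsAcyclic) :
    ∀ {l : List V} {u v : V}, l.head? = some u → l.getLast? = some v →
      edgeCutSum T w u v ≤ walkCost (edgeWeight T w) l
  | [], _, _, hu, _ => by simp at hu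
  | [a], u, v, hu, hv => by
    obtain rfl : a = u := by simpa using hu
    obtain rfl : a = v := by simpa using hv
    simp [edgeCutSum_self, walkCost]
  | a :: b :: l, u, v, hu, hv => by
    obtain rfl : a = u := by simpa using hu
    have ih := edgeCutSum_le_walkCost hT (l := b :: l) rfl (by simpa using hv)
    rw [walkCost]
    by_cases hab : T.Adj a b
    · calc edgeCutSum T w a v ≤ edgeCutSum T w a b + edgeCutSum T w b v :=
            edgeCutSum_le_add w a b v
        _ ≤ edgeWeight T w a b + walkCost (edgeWeight T w) (b :: l) := by
            rw [edgeCutSum_of_adj w hT hab, edgeWeight, if_pos hab]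
            gcongr
    · simp [edgeWeight, hab]

lemma walkCost_support_eq_edgeCutSum (hT : T.IsAcyclic) :
    ∀ {u v : V} (P : T.Walk u v), P.IsPath →
      walkCost (edgeWeight T w) P.support = edgeCutSum T w u v
  | _, _, .nil, _ => by simp [walkCost, edgeCutSum_self]
  | u, _, .cons (v := u') h P, hP => by
    rw [Walk.cons_isPath_iff] at hP
    have hu : s(u, u') ∉ P.edges := fun he => hP.2 (P.fst_mem_support_of_mem_edges he)
    rw [Walk.support_cons, ← P.cons_tail_support, walkCost, P.cons_tail_support,
      walkCost_support_eq_edgeCutSum hT P hP.1,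
      edgeCutSum_eq_add w hT h (P.toDeleteEdge _ hu).reachable, edgeWeight, if_pos h]

end TreeCut

open TreeCut

open Classical in
/-- Exact directed-ℓ1 decomposition of the shortest-path quasimetric of a directed tree:
`d(u,v) = Σ_{e=(a,b) directed edge} w(e) · d_{S_e}(u,v)`, where `S_e` is the vertex set
of the connected component of `a` in the tree with edge `{a,b}` removed. -/
theorem stmt5 (V : Type) [Fintype V] (T : SimpleGraph V) (hT : T.IsTree)
    (w : V → V → ℝ≥0) :
    ∀ u v : V,
      spDist (fun x y => if T.Adj x y then (w x y : ℝ≥0∞) else ⊤) u v =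
        ∑ p : V × V,
          (if T.Adj p.1 p.2 then
            (w p.1 p.2 : ℝ≥0∞) *
              dcutE { x | (T.deleteEdges {s(p.1, p.2)}).Reachable x p.1 } u v
          else 0) := by
  intro u v
  change spDist (edgeWeight T w) u v = edgeCutSum T w u v
  obtain ⟨P, hP⟩ := (hT.existsUnique_path u v).exists
  have hends : P.support.head? = some u ∧ P.support.getLast? = some v := by
    simp [List.head?_eq_some_head P.support_ne_nil,
      List.getLast?_eq_some_getLast P.support_ne_nil]
  refine le_antisymm ?_ (le_iInf fun l => edgeCutSum_le_walkCost w hT.isAcyclic l.2.1 l.2.2)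
  exact (iInf_le _ ⟨P.support, hends⟩).trans
    (walkCost_support_eq_edgeCutSum w hT.isAcyclic P hP).le
end
end

section
/- Let n ≥ 2 and let T be a finite tree on vertex set {v_0, …, v_{n−1}} (exactly these n vertices), made into a directed tree with nonnegative weights on its directed edges, with shortest-path quasimetric ρ. Suppose that ρ(u,v) + ρ(v,u) ≥ n for every pair of distinct vertices u, v. Then Σ_{i=0}^{n−1} ρ(v_i, v_{(i+1) mod n}) ≥ n(n−1). -/
/-! A walk from `u` to `v` in the bidirected tree must traverse every dart such that removing
its edge leaves `u` on the tail side and `v` on the head side, so `ρ(u,v)` is at least the total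
weight of these darts. Going once around `v_0 → v_1 → ⋯ → v_{n-1} → v_0` crosses every dart at
least once, so the cyclic sum is at least the total weight of all darts. That weight pairs up over
the `n - 1` edges `{a,b}`, each contributing `w(a,b) + w(b,a) ≥ ρ(a,b) + ρ(b,a) ≥ n`. -/

open scoped ENNReal NNReal

noncomputable section

open Classical in
def treeW {W : Type*} (T : SimpleGraph W) (wt : W → W → ℝ≥0) : W → W → ℝ≥0∞ :=
  fun x y => if T.Adj x y then (wt x y : ℝ≥0∞) else ⊤

theorem ZMod.exists_not_and_add_one {n : ℕ} [NeZero n] {P : ZMod n → Prop} {a b : ZMod n}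
    (ha : ¬ P a) (hb : P b) : ∃ i, ¬ P i ∧ P (i + 1) := by
  by_contra! h
  have hpath : ∀ k : ℕ, ¬ P (a + k) := by
    intro k
    induction k with
    | zero => simpa using ha
    | succ k ih => simpa [add_assoc] using h _ ih
  exact hpath (b - a).val (by simpa [ZMod.natCast_zmod_val] using hb)

section

variable {V : Type*}

lemma spDist_le (w : V → V → ℝ≥0∞) (a b : V) : spDist w a b ≤ w a b :=
  iInf_le_of_le ⟨[a, b], rfl, rfl⟩ (add_zero (w a b)).le

lemma treeW_of_adj {T : SimpleGraph V} (wt : V → V → ℝ≥0) {a b : V} (h : T.Adj a b) :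
    treeW T wt a b = wt a b := if_pos h

end

namespace SimpleGraph

variable {V : Type*} {G : SimpleGraph V}

/-- In a tree, the vertices whose path from `d.fst` starts with `d`. -/
def Dart.HeadSide (d : G.Dart) (x : V) : Prop :=
  (G.deleteEdges {d.edge}).Reachable d.snd x

lemma Dart.headSide_snd (d : G.Dart) : d.HeadSide d.snd := Reachable.refl _

lemma Dart.not_headSide_fst (hG : G.IsAcyclic) (d : G.Dart) : ¬ d.HeadSide d.fst :=
  fun h => isBridge_iff.mp (isAcyclic_iff_forall_adj_isBridge.mp hG d.adj) h.symm

lemma Dart.eq_of_adj_of_headSide {d : G.Dart} {x y : V} (hxy : G.Adj x y)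
    (hx : ¬ d.HeadSide x) (hy : d.HeadSide y) : d.fst = x ∧ d.snd = y := by
  by_cases he : s(x, y) = d.edge
  · rcases Sym2.eq_iff.mp he with ⟨h₁, h₂⟩ | ⟨h₁, -⟩
    · exact ⟨h₁.symm, h₂.symm⟩
    · exact absurd (h₁ ▸ d.headSide_snd) hx
  · refine absurd (hy.trans (Adj.reachable ?_)) hx
    rw [deleteEdges_adj, Set.mem_singleton_iff, Sym2.eq_swap]
    exact ⟨hxy.symm, he⟩

variable (G) [Fintype V] [DecidableRel G.Adj]

open Classical in
/-- The total weight of the darts that a walk from `u` to `v` has to traverse. -/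
def crossingWeight (wt : V → V → ℝ≥0) (u v : V) : ℝ≥0∞ :=
  ∑ d : G.Dart, if ¬ d.HeadSide u ∧ d.HeadSide v then (wt d.fst d.snd : ℝ≥0∞) else 0

variable (wt : V → V → ℝ≥0)

lemma crossingWeight_self (u : V) : G.crossingWeight wt u u = 0 :=
  Finset.sum_eq_zero fun _ _ => if_neg fun h => h.1 h.2

lemma crossingWeight_le_treeW_add (x y v : V) :
    G.crossingWeight wt x v ≤ treeW G wt x y + G.crossingWeight wt y v := by
  classical
  by_cases hxy : G.Adj x y
  swap
  · simp [treeW, hxy]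
  let e : G.Dart := ⟨(x, y), hxy⟩
  have hterm : ∀ d : G.Dart,
      (if ¬ d.HeadSide x ∧ d.HeadSide v then (wt d.fst d.snd : ℝ≥0∞) else 0) ≤
        (if d = e then (wt x y : ℝ≥0∞) else 0) +
          if ¬ d.HeadSide y ∧ d.HeadSide v then (wt d.fst d.snd : ℝ≥0∞) else 0 := by
    intro d
    by_cases hxv : ¬ d.HeadSide x ∧ d.HeadSide v
    · by_cases hy : d.HeadSide y
      · obtain ⟨hx, hy⟩ := d.eq_of_adj_of_headSide hxy hxv.1 hy
        rw [if_pos hxv, if_pos (Dart.ext d e (Prod.ext hx hy)), hx, hy]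
        exact le_self_add
      · simp [hxv, hy]
    · simp [hxv]
  calc G.crossingWeight wt x v
      ≤ ∑ d : G.Dart, ((if d = e then (wt x y : ℝ≥0∞) else 0) +
          if ¬ d.HeadSide y ∧ d.HeadSide v then (wt d.fst d.snd : ℝ≥0∞) else 0) :=
        Finset.sum_le_sum fun d _ => hterm d
    _ = treeW G wt x y + G.crossingWeight wt y v := by
        rw [Finset.sum_add_distrib, Finset.sum_ite_eq', if_pos (Finset.mem_univ e),
          treeW_of_adj wt hxy]
        rfl

lemma crossingWeight_le_walkCost :
    ∀ (l : List V) {u v : V}, l.head? = some u → l.getLast? = some v →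
      G.crossingWeight wt u v ≤ walkCost (treeW G wt) l
  | [], _, _, h, _ => by simp at h
  | [x], u, v, hu, hv => by
    obtain rfl : x = u := Option.some_injective _ hu
    obtain rfl : x = v := Option.some_injective _ hv
    simp [crossingWeight_self]
  | x :: y :: l, u, v, hu, hv => by
    obtain rfl : x = u := Option.some_injective _ hu
    rw [List.getLast?_cons_cons] at hv
    exact (G.crossingWeight_le_treeW_add wt x y v).trans
      (add_le_add le_rfl (crossingWeight_le_walkCost (y :: l) rfl hv))

lemma crossingWeight_le_spDist (u v : V) :
    G.crossingWeight wt u v ≤ spDist (treeW G wt) u v :=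
  le_iInf fun l => G.crossingWeight_le_walkCost wt l.1 l.2.1 l.2.2

lemma sum_dart_le_sum_crossingWeight (hG : G.IsAcyclic) {n : ℕ} [NeZero n] (f : ZMod n → V)
    (hf : Function.Surjective f) :
    ∑ d : G.Dart, (wt d.fst d.snd : ℝ≥0∞) ≤ ∑ i, G.crossingWeight wt (f i) (f (i + 1)) := by
  unfold crossingWeight
  rw [Finset.sum_comm]
  refine Finset.sum_le_sum fun d _ => ?_
  obtain ⟨a, ha⟩ := hf d.fst
  obtain ⟨b, hb⟩ := hf d.snd
  obtain ⟨i, hi⟩ := ZMod.exists_not_and_add_one (P := fun i => d.HeadSide (f i))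
    (ha ▸ d.not_headSide_fst hG) (hb ▸ d.headSide_snd)
  refine (Finset.single_le_sum (fun _ _ => zero_le) (Finset.mem_univ i)).trans' ?_
  rw [if_pos hi]

variable {G} in
lemma IsTree.card_sub_one_mul_le_sum_dart (hG : G.IsTree) (w : V → V → ℝ≥0∞) {c : ℝ≥0∞}
    (hc : ∀ d : G.Dart, c ≤ w d.fst d.snd + w d.snd d.fst) :
    ((Fintype.card V - 1 : ℕ) : ℝ≥0∞) * c ≤ ∑ d : G.Dart, w d.fst d.snd := by
  classical
  have hcard : Fintype.card G.Dart = 2 * (Fintype.card V - 1) := by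
    rw [dart_card_eq_twice_card_edges, ← hG.card_edgeFinset, Nat.add_sub_cancel]
  have hsymm : ∑ d : G.Dart, w d.snd d.fst = ∑ d : G.Dart, w d.fst d.snd :=
    Equiv.sum_comp (Dart.symm_involutive.toPerm _) fun d : G.Dart => w d.fst d.snd
  rw [← ENNReal.mul_le_mul_iff_right two_ne_zero ENNReal.ofNat_ne_top]
  calc 2 * (((Fintype.card V - 1 : ℕ) : ℝ≥0∞) * c) = ∑ _d : G.Dart, c := by
        rw [Finset.sum_const, Finset.card_univ, hcard, nsmul_eq_mul, Nat.cast_mul, mul_assoc]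
        rfl
    _ ≤ ∑ d : G.Dart, (w d.fst d.snd + w d.snd d.fst) := Finset.sum_le_sum fun d _ => hc d
    _ = 2 * ∑ d : G.Dart, w d.fst d.snd := by rw [Finset.sum_add_distrib, hsymm, two_mul]

end SimpleGraph

theorem stmt7_general (n : ℕ) [NeZero n]
    (T : SimpleGraph (ZMod n)) (hT : T.IsTree) (wt : ZMod n → ZMod n → ℝ≥0)
    (hfar : ∀ u v : ZMod n, u ≠ v →
      (n : ℝ≥0∞) ≤ spDist (treeW T wt) u v + spDist (treeW T wt) v u) :
    ((n * (n - 1) : ℕ) : ℝ≥0∞) ≤ ∑ i : ZMod n, spDist (treeW T wt) i (i + 1) := by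
  classical
  have hdart : ∀ d : T.Dart, (n : ℝ≥0∞) ≤ wt d.fst d.snd + wt d.snd d.fst := fun d =>
    (hfar _ _ d.adj.ne).trans <| add_le_add
      ((spDist_le _ _ _).trans_eq (treeW_of_adj wt d.adj))
      ((spDist_le _ _ _).trans_eq (treeW_of_adj wt d.adj.symm))
  calc ((n * (n - 1) : ℕ) : ℝ≥0∞) = ((Fintype.card (ZMod n) - 1 : ℕ) : ℝ≥0∞) * n := by
        rw [ZMod.card, Nat.cast_mul, mul_comm]
    _ ≤ ∑ d : T.Dart, (wt d.fst d.snd : ℝ≥0∞) :=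
        hT.card_sub_one_mul_le_sum_dart (fun a b => wt a b) hdart
    _ ≤ ∑ i, T.crossingWeight wt i (i + 1) :=
        T.sum_dart_le_sum_crossingWeight wt hT.isAcyclic id Function.surjective_id
    _ ≤ _ := Finset.sum_le_sum fun i _ => T.crossingWeight_le_spDist wt i (i + 1)

/-- If a directed tree on the `n` vertices `v_0, …, v_{n-1}` satisfies
`ρ(u,v) + ρ(v,u) ≥ n` for all distinct `u, v`, then
`Σ_i ρ(v_i, v_{(i+1) mod n}) ≥ n(n-1)`. -/
theorem stmt7 (n : ℕ) [NeZero n] (hn : 2 ≤ n)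
    (T : SimpleGraph (ZMod n)) (hT : T.IsTree) (wt : ZMod n → ZMod n → ℝ≥0)
    (hfar : ∀ u v : ZMod n, u ≠ v →
      (n : ℝ≥0∞) ≤ spDist (treeW T wt) u v + spDist (treeW T wt) v u) :
    ((n * (n - 1) : ℕ) : ℝ≥0∞) ≤ ∑ i : ZMod n, spDist (treeW T wt) i (i + 1) :=
  stmt7_general n T hT wt hfar
end
end

section
/- Let r > 0 and let a, b be real numbers with 0 ≤ a ≤ b. Then the Lebesgue measure of the set {z ∈ [0, r] : ∃ i ∈ ℕ, a ≤ i·r + z and i·r + z < b} is at most b − a. Consequently, if z is chosen uniformly at random from [0, r], and x, u, v are points of a quasimetric space (X, d) with d(x,u) ≤ d(x,v) ≤ d(x,u) + d(u,v), then the probability that there exists an integer i ≥ 0 with d(x,u) ≤ i·r + z < d(x,v) is at most d(u,v)/r. -/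
open scoped ENNReal NNReal

noncomputable section

/-- `d` is a quasimetric: vanishing exactly on the diagonal, and satisfying the
directed triangle inequality. -/
def IsQuasimetricD {X : Type*} (d : X → X → ℝ≥0∞) : Prop :=
  (∀ x y, d x y = 0 ↔ x = y) ∧ ∀ x y z, d x y ≤ d x z + d z y

/-!
The level translates `[i r, (i + 1) r)` of `[0, r)` are pairwise disjoint, so the sets of
offsets `z ∈ [0, r)` whose `i`-th level `i r + z` lies in `A` have total measure at most that
of `A ∩ [0, ∞)`; the endpoint `z = r` is a null set. For the cut estimate, `A` is the set of
`t ≥ 0` with `d(x,u) ≤ t < d(x,v)`, of measure at most `d(x,v) - d(x,u) ≤ d(u,v)`.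
-/

section

open MeasureTheory Set Function

theorem pairwise_disjoint_Ico_nat_mul (r : ℝ) :
    Pairwise (Disjoint on fun i : ℕ => Ico ((i : ℝ) * r) (i * r + r)) := by
  intro i j hij
  simpa [onFun, add_mul] using
    pairwise_disjoint_Ico_add_zsmul (0 : ℝ) r (Nat.cast_injective.ne hij : (i : ℤ) ≠ j)

theorem volume_Ico_inter_preimage_const_add (c r : ℝ) (A : Set ℝ) :
    volume (Ico 0 r ∩ (c + ·) ⁻¹' A) = volume (Ico c (c + r) ∩ A) := by
  rw [← measure_preimage_add _ c (Ico c (c + r) ∩ A)]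
  congr 1
  ext z
  simp only [mem_inter_iff, mem_preimage, mem_Ico]
  constructor <;> rintro ⟨⟨h₁, h₂⟩, h⟩ <;> exact ⟨⟨by linarith, by linarith⟩, h⟩

theorem Ico_nat_mul_subset_Ici_zero (r : ℝ) (i : ℕ) : Ico ((i : ℝ) * r) (i * r + r) ⊆ Ici 0 := by
  rintro z ⟨h₁, h₂⟩
  have hr : 0 < r := by linarith
  exact le_trans (by positivity) h₁

theorem volume_setOf_Ico_exists_nat_mul_add_mem_le (r : ℝ) {A : Set ℝ} (hA : MeasurableSet A) :
    volume {z ∈ Ico 0 r | ∃ i : ℕ, (i : ℝ) * r + z ∈ A} ≤ volume (A ∩ Ici 0) := by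
  have hcover : {z ∈ Ico 0 r | ∃ i : ℕ, (i : ℝ) * r + z ∈ A}
      = ⋃ i : ℕ, Ico 0 r ∩ ((i : ℝ) * r + ·) ⁻¹' A := by
    ext z
    simp only [mem_ofPred_eq, mem_iUnion, mem_inter_iff, mem_preimage, exists_and_left]
  calc volume {z ∈ Ico 0 r | ∃ i : ℕ, (i : ℝ) * r + z ∈ A}
      ≤ ∑' i : ℕ, volume (Ico 0 r ∩ ((i : ℝ) * r + ·) ⁻¹' A) := hcover ▸ measure_iUnion_le _
    _ = ∑' i : ℕ, volume (Ico ((i : ℝ) * r) (i * r + r) ∩ A) := by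
        simp only [volume_Ico_inter_preimage_const_add]
    _ = volume (⋃ i : ℕ, Ico ((i : ℝ) * r) (i * r + r) ∩ A) :=
        (measure_iUnion ((pairwise_disjoint_Ico_nat_mul r).mono fun _ _ h =>
          h.mono inter_subset_left inter_subset_left)
          fun _ => measurableSet_Ico.inter hA).symm
    _ ≤ volume (A ∩ Ici 0) := measure_mono <| iUnion_subset fun i =>
        inter_comm (Ico _ _) A ▸ inter_subset_inter_right A (Ico_nat_mul_subset_Ici_zero r i)

theorem volume_setOf_Icc_exists_nat_mul_add_mem_le (r : ℝ) {A : Set ℝ} (hA : MeasurableSet A) :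
    volume {z ∈ Icc 0 r | ∃ i : ℕ, (i : ℝ) * r + z ∈ A} ≤ volume (A ∩ Ici 0) := by
  have hae : {z ∈ Icc 0 r | ∃ i : ℕ, (i : ℝ) * r + z ∈ A}
      =ᵐ[volume] {z ∈ Ico 0 r | ∃ i : ℕ, (i : ℝ) * r + z ∈ A} :=
    Ico_ae_eq_Icc.symm.inter (Filter.EventuallyEq.refl _ {z | ∃ i : ℕ, (i : ℝ) * r + z ∈ A})
  exact (measure_congr hae).trans_le (volume_setOf_Ico_exists_nat_mul_add_mem_le r hA)

theorem volume_preimage_ofReal_Ico_inter_Ici_le (α β : ℝ≥0∞) :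
    volume (ENNReal.ofReal ⁻¹' Ico α β ∩ Ici 0) ≤ β - α := by
  rcases eq_or_ne α ⊤ with rfl | hα
  · simp
  rcases eq_or_ne β ⊤ with rfl | hβ
  · simp [hα]
  have hsub : ENNReal.ofReal ⁻¹' Ico α β ∩ Ici 0 ⊆ Ico α.toReal β.toReal := by
    rintro t ⟨⟨h₁, h₂⟩, ht : 0 ≤ t⟩
    exact ⟨ENNReal.toReal_le_of_le_ofReal ht h₁, (ENNReal.ofReal_lt_iff_lt_toReal ht hβ).1 h₂⟩
  calc volume (ENNReal.ofReal ⁻¹' Ico α β ∩ Ici 0) ≤ volume (Ico α.toReal β.toReal) :=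
        measure_mono hsub
    _ = β - α := by
        rw [Real.volume_Ico, ENNReal.ofReal_sub _ ENNReal.toReal_nonneg,
          ENNReal.ofReal_toReal hα, ENNReal.ofReal_toReal hβ]

end

theorem stmt9_general (r : ℝ) :
    (∀ a b : ℝ, 0 ≤ a → a ≤ b →
      MeasureTheory.volume
        {z : ℝ | z ∈ Set.Icc (0 : ℝ) r ∧
          ∃ i : ℕ, a ≤ (i : ℝ) * r + z ∧ (i : ℝ) * r + z < b}
        ≤ ENNReal.ofReal (b - a)) ∧
    ∀ (X : Type) (d : X → X → ℝ≥0∞), IsQuasimetricD d →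
      ∀ x u v : X, d x u ≤ d x v → d x v ≤ d x u + d u v →
        MeasureTheory.volume
          {z : ℝ | z ∈ Set.Icc (0 : ℝ) r ∧
            ∃ i : ℕ, d x u ≤ ENNReal.ofReal ((i : ℝ) * r + z) ∧
              ENNReal.ofReal ((i : ℝ) * r + z) < d x v}
          / ENNReal.ofReal r
        ≤ d u v / ENNReal.ofReal r := by
  refine ⟨fun a b _ _ => ?_, fun X d _ x u v _ hv => ?_⟩
  · calc _ ≤ MeasureTheory.volume (Set.Ico a b ∩ Set.Ici 0) :=
          volume_setOf_Icc_exists_nat_mul_add_mem_le r measurableSet_Ico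
      _ ≤ MeasureTheory.volume (Set.Ico a b) := MeasureTheory.measure_mono Set.inter_subset_left
      _ = ENNReal.ofReal (b - a) := Real.volume_Ico
  · gcongr
    calc _ ≤ MeasureTheory.volume (ENNReal.ofReal ⁻¹' Set.Ico (d x u) (d x v) ∩ Set.Ici 0) :=
          volume_setOf_Icc_exists_nat_mul_add_mem_le r
            (ENNReal.measurable_ofReal measurableSet_Ico)
      _ ≤ d x v - d x u := volume_preimage_ofReal_Ico_inter_Ici_le _ _
      _ ≤ d u v := tsub_le_iff_left.2 hv

/-- The region-growing estimate: for `0 ≤ a ≤ b`, the set of offsets `z ∈ [0,r]` for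
which some level `i·r + z` falls in `[a,b)` has Lebesgue measure at most `b - a`; and
consequently a uniformly random level cut separates points `u, v` (with
`d(x,u) ≤ d(x,v) ≤ d(x,u) + d(u,v)`) with probability at most `d(u,v)/r`. -/
theorem stmt9 (r : ℝ) (hr : 0 < r) :
    (∀ a b : ℝ, 0 ≤ a → a ≤ b →
      MeasureTheory.volume
        {z : ℝ | z ∈ Set.Icc (0 : ℝ) r ∧
          ∃ i : ℕ, a ≤ (i : ℝ) * r + z ∧ (i : ℝ) * r + z < b}
        ≤ ENNReal.ofReal (b - a)) ∧
    ∀ (X : Type) (d : X → X → ℝ≥0∞), IsQuasimetricD d →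
      ∀ x u v : X, d x u ≤ d x v → d x v ≤ d x u + d u v →
        MeasureTheory.volume
          {z : ℝ | z ∈ Set.Icc (0 : ℝ) r ∧
            ∃ i : ℕ, d x u ≤ ENNReal.ofReal ((i : ℝ) * r + z) ∧
              ENNReal.ofReal ((i : ℝ) * r + z) < d x v}
          / ENNReal.ofReal r
        ≤ d u v / ENNReal.ofReal r :=
  stmt9_general r
end
end

section
/- Let G be a directed tree with nonnegative weights w on its directed edges and shortest-path quasimetric d, and suppose W = Σ_{e ∈ E(G)} w(e) > 0. Choose a random directed edge e ∈ E(G) with probability w(e)/W, and let Q_e = {(x,y) ∈ V(G)×V(G) : the unique directed path from x to y in G does not traverse e} (a quasipartition of (V(G), d)). Then for all u, v ∈ V(G): Pr[(u,v) ∉ Q_e] = d(u,v)/W. -/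
open scoped ENNReal NNReal

noncomputable section

/-- A quasipartition: a reflexive and transitive relation. -/
def IsQuasipartition {V : Type*} (Q : V → V → Prop) : Prop :=
  (∀ x, Q x x) ∧ ∀ x y z, Q x y → Q y z → Q x z

/-- An `r`-bounded relation with respect to the quasimetric `d`. -/
def IsRBounded {V : Type*} (d : V → V → ℝ≥0∞) (r : ℝ≥0∞) (Q : V → V → Prop) : Prop :=
  ∀ x y, Q x y → d x y ≤ r

/-- The unique directed path from `x` to `y` in the tree `T` does not traverse the
directed edge `e`. -/
def avoids {V : Type*} (T : SimpleGraph V) (e : V × V) (x y : V) : Prop :=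
  ∀ p : T.Walk x y, p.IsPath → ∀ dd ∈ p.darts, dd.toProd ≠ e

/-!
In a tree there is exactly one path `p` from `u` to `v`. Every walk from `u` to `v` shortcuts
to `p` without gaining weight, so `d(u,v)` is the weight of `p`; and a directed edge `e`
separates `(u,v)` exactly when `e` is traversed by `p`. Hence the total weight of the separating
edges is `d(u,v)`, and dividing by `W` gives the probability.
-/

namespace SimpleGraph

variable {V : Type*} {G : SimpleGraph V} {u v x : V}

namespace Walk

def cost (w : V → V → ℝ≥0∞) (p : G.Walk u v) : ℝ≥0∞ :=
  (p.darts.map fun d => w d.fst d.snd).sum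

variable (w : V → V → ℝ≥0∞)

@[simp]
lemma cost_nil : (nil : G.Walk u u).cost w = 0 := rfl

@[simp]
lemma cost_cons (h : G.Adj u v) (p : G.Walk v x) : (cons h p).cost w = w u v + p.cost w := rfl

lemma cost_bypass_le [DecidableEq V] (p : G.Walk u v) : p.bypass.cost w ≤ p.cost w :=
  (p.darts_bypass_sublist_darts.map _).sum_le_sum fun _ _ => zero_le

open Classical in
lemma walkCost_support (p : G.Walk u v) :
    walkCost (fun x y => if G.Adj x y then w x y else ⊤) p.support = p.cost w := by
  induction p with
  | nil => rfl
  | cons h p ih =>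
    rw [support_cons, ← p.cons_tail_support, walkCost, p.cons_tail_support, ih, if_pos h,
      cost_cons]

end Walk

variable (w : V → V → ℝ≥0∞)

open Classical in
lemma iInf_cost_le_walkCost : ∀ (l : List V) (hl : l ≠ []), l.getLast? = some v →
    ⨅ p : G.Walk (l.head hl) v, p.cost w ≤
      walkCost (fun x y => if G.Adj x y then w x y else ⊤) l
  | [a], _, hv => by
    obtain rfl : a = v := by simpa using hv
    exact iInf_le_of_le .nil le_rfl
  | a :: b :: l, _, hv => by
    rw [walkCost]
    split_ifs with hab
    · have ih := iInf_cost_le_walkCost (b :: l) (List.cons_ne_nil b l) (by simpa using hv)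
      calc ⨅ p : G.Walk a v, p.cost w
          ≤ ⨅ p : G.Walk b v, (Walk.cons hab p).cost w := le_iInf fun p => iInf_le _ _
        _ = w a b + ⨅ p : G.Walk b v, p.cost w := by simp only [Walk.cost_cons, ENNReal.add_iInf]
        _ ≤ _ := add_le_add le_rfl ih
    · simp

open Classical in
lemma spDist_eq_iInf_cost :
    spDist (fun x y => if G.Adj x y then w x y else ⊤) u v = ⨅ p : G.Walk u v, p.cost w := by
  refine le_antisymm (le_iInf fun p => ?_) (le_iInf fun ⟨l, hu, hv⟩ => ?_)
  · refine (iInf_le _ ⟨p.support, ?_, ?_⟩).trans_eq (p.walkCost_support w)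
    · rw [List.head?_eq_some_head p.support_ne_nil, Walk.head_support]
    · rw [List.getLast?_eq_some_getLast p.support_ne_nil, Walk.getLast_support]
  · have hl : l ≠ [] := by rintro rfl; simp at hu
    obtain rfl : l.head hl = u := by simpa [List.head?_eq_some_head hl] using hu
    exact iInf_cost_le_walkCost w l hl hv

lemma IsAcyclic.eq_of_isPath (hG : G.IsAcyclic) {p : G.Walk u v} (hp : p.IsPath)
    (q : G.Path u v) : p = q.1 :=
  congrArg Subtype.val ((hG.subsingleton_path u v).elim ⟨p, hp⟩ q)

lemma IsAcyclic.iInf_cost_eq (hG : G.IsAcyclic) (q : G.Path u v) :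
    ⨅ p : G.Walk u v, p.cost w = q.1.cost w := by
  classical
  refine le_antisymm (iInf_le _ _) (le_iInf fun p => ?_)
  exact hG.eq_of_isPath p.bypass_isPath q ▸ p.cost_bypass_le w

lemma IsAcyclic.avoids_iff (hG : G.IsAcyclic) (q : G.Path u v) (e : V × V) :
    avoids G e u v ↔ e ∉ q.1.darts.map Dart.toProd := by
  refine ⟨fun h he => ?_, fun h p hp d hd hde => h ?_⟩
  · obtain ⟨d, hd, rfl⟩ := List.mem_map.1 he
    exact h q.1 q.2 d hd rfl
  · obtain rfl := hG.eq_of_isPath hp q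
    exact List.mem_map.2 ⟨d, hd, hde⟩

/-- The path from `x` to `z` shortcuts the concatenation of the paths through `y`, so its darts
are among theirs. -/
lemma IsTree.isQuasipartition_avoids (hG : G.IsTree) (e : V × V) :
    IsQuasipartition (avoids G e) := by
  classical
  refine ⟨fun x => ?_, fun x y z hxy hyz => ?_⟩
  · rw [hG.isAcyclic.avoids_iff Path.nil]
    simp
  · obtain ⟨p⟩ := hG.connected.preconnected x y
    obtain ⟨q⟩ := hG.connected.preconnected y z
    rw [hG.isAcyclic.avoids_iff p.toPath] at hxy
    rw [hG.isAcyclic.avoids_iff q.toPath] at hyz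
    rw [hG.isAcyclic.avoids_iff (p.toPath.1.append q.toPath.1).toPath]
    intro he
    obtain ⟨d, hd, rfl⟩ := List.mem_map.1 he
    have hd' := Walk.darts_append _ _ ▸ Walk.darts_toPath_subset_darts _ hd
    rcases List.mem_append.1 hd' with hp | hq
    · exact hxy (List.mem_map_of_mem hp)
    · exact hyz (List.mem_map_of_mem hq)

open Classical in
lemma IsAcyclic.sum_not_avoids_eq_cost [Fintype V] (hG : G.IsAcyclic) (q : G.Path u v) :
    ∑ e : V × V, (if G.Adj e.1 e.2 ∧ ¬ avoids G e u v then w e.1 e.2 else 0) =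
      q.1.cost w := by
  set L := q.1.darts.map Dart.toProd
  have hmem (e : V × V) : (G.Adj e.1 e.2 ∧ ¬ avoids G e u v) ↔ e ∈ L.toFinset := by
    rw [hG.avoids_iff q, not_not, List.mem_toFinset]
    exact and_iff_right_of_imp fun he => by
      obtain ⟨d, -, rfl⟩ := List.mem_map.1 he
      exact d.adj
  have hL : L.Nodup :=
    (Walk.darts_nodup_of_support_nodup q.2.support_nodup).map Dart.toProd_injective
  rw [Finset.sum_congr rfl fun e _ => if_congr (hmem e) rfl rfl, Finset.sum_ite_mem,
    Finset.univ_inter, List.sum_toFinset _ hL, List.map_map]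
  rfl

end SimpleGraph

open Classical in
theorem stmt13_general (V : Type) [Fintype V] (T : SimpleGraph V) (hT : T.IsTree)
    (w : V → V → ℝ≥0) :
    (∀ e : V × V, T.Adj e.1 e.2 → IsQuasipartition (avoids T e)) ∧
    ∀ u v : V,
      (∑ p : V × V,
          if T.Adj p.1 p.2 ∧ ¬ avoids T p u v then (w p.1 p.2 : ℝ≥0∞) else 0) /
          (∑ p : V × V, if T.Adj p.1 p.2 then (w p.1 p.2 : ℝ≥0∞) else 0)
        = spDist (fun x y => if T.Adj x y then (w x y : ℝ≥0∞) else ⊤) u v /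
            (∑ p : V × V, if T.Adj p.1 p.2 then (w p.1 p.2 : ℝ≥0∞) else 0) := by
  refine ⟨fun e _ => hT.isQuasipartition_avoids e, fun u v => ?_⟩
  obtain ⟨p⟩ := hT.connected.preconnected u v
  rw [hT.isAcyclic.sum_not_avoids_eq_cost (fun x y => (w x y : ℝ≥0∞)) p.toPath,
    SimpleGraph.spDist_eq_iInf_cost (fun x y => (w x y : ℝ≥0∞)),
    hT.isAcyclic.iInf_cost_eq _ p.toPath]

open Classical in
/-- Choosing a random directed edge `e` of a directed tree with probability `w(e)/W`
and forming the quasipartition `Q_e` of pairs whose directed path avoids `e`, each pair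
`(u,v)` is separated with probability exactly `d(u,v)/W`. -/
theorem stmt13 (V : Type) [Fintype V] (T : SimpleGraph V) (hT : T.IsTree)
    (w : V → V → ℝ≥0)
    (hW : 0 < ∑ p : V × V, if T.Adj p.1 p.2 then w p.1 p.2 else 0) :
    (∀ e : V × V, T.Adj e.1 e.2 → IsQuasipartition (avoids T e)) ∧
    ∀ u v : V,
      (∑ p : V × V,
          if T.Adj p.1 p.2 ∧ ¬ avoids T p u v then (w p.1 p.2 : ℝ≥0∞) else 0) /
          (∑ p : V × V, if T.Adj p.1 p.2 then (w p.1 p.2 : ℝ≥0∞) else 0)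
        = spDist (fun x y => if T.Adj x y then (w x y : ℝ≥0∞) else ⊤) u v /
            (∑ p : V × V, if T.Adj p.1 p.2 then (w p.1 p.2 : ℝ≥0∞) else 0) :=
  stmt13_general V T hT w
end
end
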